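/- Assume V satisfies (V1)-(V3) with V_∞ = liminf_{|y|→∞} V(y), V(x) ≤ V_∞ a.e. with strict inequality on a set of positive measure, and assume the constant-potential problem at level V_∞ admits a ground state w. Then c = inf_N I < c(V_∞) = inf_{N_{V_∞}} I_{V_∞}. -/

import Mathlib

open MeasureTheory Real Filter Topology
open scoped ENNReal RealInnerProductSpace

noncomputable section

/-- ℝ³ as a Euclidean space. -/
abbrev E3 : Type := EuclideanSpace ℝ (Fin 3)

/-- Newtonian potential of `u²`: `φ_u(x) = (1/(4π)) ∫ u(y)²/|x-y| dy`. -/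
def phiU (u : E3 → ℝ) (x : E3) : ℝ :=
  (1 / (4 * π)) * ∫ y : E3, (u y) ^ 2 / ‖x - y‖

/-- Membership in `H¹(ℝ³)` (encoded via the gradient). -/
def MemH1 (u : E3 → ℝ) : Prop :=
  Differentiable ℝ u ∧ MemLp u 2 volume ∧
    MemLp (fun x => gradient u x) 2 volume

/-- Square of the `H¹` norm: `∫ (|∇u|² + u²)`. -/
def H1normSq (u : E3 → ℝ) : ℝ :=
  ∫ x : E3, (‖gradient u x‖ ^ 2 + (u x) ^ 2)

/-- Membership in `D^{1,2}(ℝ³)` (via the characterization `φ ∈ L⁶`, `∇φ ∈ L²`). -/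
def MemD12 (φ : E3 → ℝ) : Prop :=
  Differentiable ℝ φ ∧ MemLp φ 6 volume ∧
    MemLp (fun x => gradient φ x) 2 volume

/-- The `D^{1,2}` norm: `‖∇φ‖_{L²}`. -/
def D12norm (φ : E3 → ℝ) : ℝ :=
  Real.sqrt (∫ x : E3, ‖gradient φ x‖ ^ 2)

/-- `φ` is a weak solution of `-Δφ = u²` in `ℝ³`. -/
def IsWeakSol (u φ : E3 → ℝ) : Prop :=
  ∀ ψ : E3 → ℝ, ContDiff ℝ (⊤ : ℕ∞) ψ → HasCompactSupport ψ →
    ∫ x : E3, (inner ℝ (gradient φ x) (gradient ψ x) : ℝ) = ∫ x : E3, (u x) ^ 2 * ψ x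

/-- `L^s` norm. -/
def Lnorm (u : E3 → ℝ) (s : ℝ) : ℝ :=
  (∫ x : E3, |u x| ^ s) ^ (1 / s)

/-- The reduced Schrödinger–Maxwell functional
`I(u) = ½∫(|∇u|²+Vu²) + ¼∫φ_u u² − (1/(p+1))∫|u|^{p+1}`. -/
def SMfunc (V : E3 → ℝ) (p : ℝ) (u : E3 → ℝ) : ℝ :=
  (1 / 2) * (∫ x : E3, (‖gradient u x‖ ^ 2 + V x * (u x) ^ 2))
    + (1 / 4) * (∫ x : E3, phiU u x * (u x) ^ 2)
    - (1 / (p + 1)) * (∫ x : E3, |u x| ^ (p + 1))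

/-- Coercivity hypothesis (V3): `∫(|∇u|²+Vu²) ≥ C‖u‖²_{H¹}`. -/
def Coercive (V : E3 → ℝ) (C : ℝ) : Prop :=
  ∀ u : E3 → ℝ, MemH1 u →
    C * H1normSq u ≤ ∫ x : E3, (‖gradient u x‖ ^ 2 + V x * (u x) ^ 2)

/-- The Nehari manifold `N = {u ≠ 0 : ∫(|∇u|²+Vu²+φ_u u²) = ∫|u|^{p+1}}`. -/
def InNehari (V : E3 → ℝ) (p : ℝ) (u : E3 → ℝ) : Prop :=
  MemH1 u ∧ ¬ (u =ᵐ[volume] (fun _ => (0 : ℝ))) ∧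
    (∫ x : E3, (‖gradient u x‖ ^ 2 + V x * (u x) ^ 2 + phiU u x * (u x) ^ 2))
      = ∫ x : E3, |u x| ^ (p + 1)

/-- The ground state level `c = inf_N I`. -/
def groundLevel (V : E3 → ℝ) (p : ℝ) : ℝ :=
  sInf (SMfunc V p '' {u | InNehari V p u})

/-- The level `c(λ)` for the constant potential `λ`. -/
def cLam (p lam : ℝ) : ℝ := groundLevel (fun _ => lam) p

/-! ### Auxiliary lemmas -/

lemma grad_const_mul {u : E3 → ℝ} (hu : Differentiable ℝ u) (c : ℝ) (x : E3) :
    gradient (fun y => c * u y) x = c • gradient u x := by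
  unfold gradient
  rw [fderiv_const_mul (hu x) c, _root_.map_smul]

lemma grad_comp_add_right {u : E3 → ℝ} (hu : Differentiable ℝ u) (τ x : E3) :
    gradient (fun y => u (y + τ)) x = gradient u (x + τ) := by
  have h3 : HasFDerivAt (fun y : E3 => y + τ) (ContinuousLinearMap.id ℝ E3) x :=
    (hasFDerivAt_id x).add_const τ
  have h1 : HasFDerivAt (fun y : E3 => u (y + τ)) (fderiv ℝ u (x + τ)) x := by
    exact (hu (x + τ)).hasFDerivAt.comp x h3
  unfold gradient
  rw [h1.fderiv]

lemma phiU_nonneg (u : E3 → ℝ) (x : E3) : 0 ≤ phiU u x :=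
  mul_nonneg (by positivity) (integral_nonneg fun y => div_nonneg (sq_nonneg _) (norm_nonneg _))

lemma phiU_const_mul (u : E3 → ℝ) (c : ℝ) (x : E3) :
    phiU (fun y => c * u y) x = c ^ 2 * phiU u x := by
  unfold phiU
  rw [show (∫ y : E3, (c * u y) ^ 2 / ‖x - y‖) = ∫ y : E3, c ^ 2 * ((u y) ^ 2 / ‖x - y‖) by
        congr 1; funext y; rw [mul_pow]; ring, integral_const_mul]
  ring

lemma phiU_comp_add_right (u : E3 → ℝ) (τ x : E3) :
    phiU (fun y => u (y + τ)) x = phiU u (x + τ) := by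
  unfold phiU
  congr 1
  calc ∫ y : E3, (u (y + τ)) ^ 2 / ‖x - y‖
      = ∫ y : E3, (u (y + τ)) ^ 2 / ‖(x + τ) - (y + τ)‖ := by
        congr 1; funext y; rw [add_sub_add_right_eq_sub]
    _ = ∫ y : E3, (u y) ^ 2 / ‖(x + τ) - y‖ :=
        integral_add_right_eq_self (fun y => (u y) ^ 2 / ‖(x + τ) - y‖) τ

/-- Key scalar inequality: `s ↦ (1 - t^s)/s` is antitone on `(0,∞)` for `t ∈ (0,1]`. -/
lemma kl {t s₁ s₂ : ℝ} (ht0 : 0 < t) (ht1 : t ≤ 1) (hs₁ : 0 < s₁) (hs : s₁ ≤ s₂) :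
    s₁ * (1 - t ^ s₂) ≤ s₂ * (1 - t ^ s₁) := by
  have hs₂ : 0 < s₂ := lt_of_lt_of_le hs₁ hs
  set x := t ^ s₂ with hx
  have hx0 : 0 ≤ x := Real.rpow_nonneg ht0.le _
  have hθ1 : s₁ / s₂ ≤ 1 := (div_le_one hs₂).2 hs
  have hθ : t ^ s₁ = x ^ (s₁ / s₂) := by
    rw [hx, ← Real.rpow_mul ht0.le]
    congr 1
    field_simp
  have hgm := Real.geom_mean_le_arith_mean2_weighted
    (w₁ := s₁ / s₂) (w₂ := 1 - s₁ / s₂) (p₁ := x) (p₂ := 1)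
    (div_nonneg hs₁.le hs₂.le) (by linarith) hx0 zero_le_one (by ring)
  rw [Real.one_rpow, mul_one] at hgm
  rw [hθ]
  have h2 : s₂ * (x ^ (s₁ / s₂)) ≤ s₁ * x + (s₂ - s₁) := by
    calc s₂ * (x ^ (s₁ / s₂)) ≤ s₂ * (s₁ / s₂ * x + (1 - s₁ / s₂) * 1) :=
          mul_le_mul_of_nonneg_left hgm hs₂.le
      _ = s₁ * x + (s₂ - s₁) := by field_simp
  linarith [h2]

/-- Coercivity plus nontriviality forces the quadratic form to be integrable and positive. -/
lemma nehari_base (V : E3 → ℝ) (Cbar : ℝ) (hC : 0 < Cbar) (hcoer : Coercive V Cbar)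
    {u : E3 → ℝ} (hH1 : MemH1 u) (hne : ¬ (u =ᵐ[volume] (fun _ => (0 : ℝ)))) :
    Integrable (fun x => ‖gradient u x‖ ^ 2 + V x * (u x) ^ 2) volume ∧
      0 < ∫ x : E3, (‖gradient u x‖ ^ 2 + V x * (u x) ^ 2) := by
  obtain ⟨hud, huL2, hugL2⟩ := hH1
  have hIg2 : Integrable (fun x => ‖gradient u x‖ ^ 2) volume := hugL2.norm.integrable_sq
  have hIu2 : Integrable (fun x => (u x) ^ 2) volume := huL2.integrable_sq
  have hsupp : volume (Function.support u) ≠ 0 := by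
    intro h0
    apply hne
    rw [Filter.eventuallyEq_iff_exists_mem]
    refine ⟨(Function.support u)ᶜ, ?_, fun x hx => by simpa [Function.support] using hx⟩
    rw [mem_ae_iff, compl_compl]
    exact h0
  have hu2pos : 0 < ∫ x : E3, (u x) ^ 2 := by
    rw [integral_pos_iff_support_of_nonneg_ae (Eventually.of_forall fun x => sq_nonneg _) hIu2]
    have : Function.support (fun x => (u x) ^ 2) = Function.support u := by
      ext x; simp [Function.support, pow_eq_zero_iff]
    rw [this]
    exact pos_iff_ne_zero.2 hsupp
  have hH1pos : 0 < H1normSq u := by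
    unfold H1normSq
    rw [integral_add hIg2 hIu2]
    have hnn : (0:ℝ) ≤ ∫ x : E3, ‖gradient u x‖ ^ 2 :=
      integral_nonneg fun x => sq_nonneg _
    linarith
  have hcoer' := hcoer u ⟨hud, huL2, hugL2⟩
  have hpos : 0 < ∫ x : E3, (‖gradient u x‖ ^ 2 + V x * (u x) ^ 2) :=
    lt_of_lt_of_le (mul_pos hC hH1pos) hcoer'
  refine ⟨?_, hpos⟩
  by_contra hni
  rw [integral_undef hni] at hpos
  exact lt_irrefl _ hpos

/-- On the Nehari manifold the functional is nonnegative. -/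
lemma nehari_nonneg (V : E3 → ℝ) (Cbar p : ℝ) (hC : 0 < Cbar) (hcoer : Coercive V Cbar)
    (hp1 : 3 < p) {u : E3 → ℝ} (hu : InNehari V p u) : 0 ≤ SMfunc V p u := by
  obtain ⟨hH1, hne, hNe⟩ := hu
  obtain ⟨hgint, hgpos⟩ := nehari_base V Cbar hC hcoer hH1 hne
  have hppos : (0:ℝ) < p + 1 := by linarith
  have hBnn : 0 ≤ ∫ x : E3, phiU u x * (u x) ^ 2 :=
    integral_nonneg fun x => mul_nonneg (phiU_nonneg u x) (sq_nonneg _)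
  have hqnn : 0 ≤ ∫ x : E3, |u x| ^ (p + 1) :=
    integral_nonneg fun x => Real.rpow_nonneg (abs_nonneg _) _
  have e1 : (1:ℝ) / (p + 1) ≤ 1 / 4 := by
    rw [div_le_div_iff₀ hppos (by norm_num)]; linarith
  unfold SMfunc
  by_cases hint : Integrable
      (fun x => (‖gradient u x‖ ^ 2 + V x * (u x) ^ 2) + phiU u x * (u x) ^ 2) volume
  · have hh : Integrable (fun x => phiU u x * (u x) ^ 2) volume := by
      have h' := hint.sub hgint
      refine h'.congr (Eventually.of_forall fun x => ?_)
      simp only [Pi.sub_apply]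
      ring
    have hsplit : (∫ x : E3, (‖gradient u x‖ ^ 2 + V x * (u x) ^ 2 + phiU u x * (u x) ^ 2))
        = (∫ x : E3, (‖gradient u x‖ ^ 2 + V x * (u x) ^ 2))
          + ∫ x : E3, phiU u x * (u x) ^ 2 := integral_add hgint hh
    rw [hsplit] at hNe
    rw [← hNe]
    nlinarith [hgpos, hBnn, e1]
  · have h0 : (∫ x : E3, (‖gradient u x‖ ^ 2 + V x * (u x) ^ 2 + phiU u x * (u x) ^ 2)) = 0 :=
      integral_undef hint
    have hq0 : (∫ x : E3, |u x| ^ (p + 1)) = 0 := by rw [← hNe]; exact h0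
    have hhn : ¬ Integrable (fun x => phiU u x * (u x) ^ 2) volume := fun hh => hint (hgint.add hh)
    have hh0 : (∫ x : E3, phiU u x * (u x) ^ 2) = 0 := integral_undef hhn
    rw [hq0, hh0]
    linarith [hgpos]

set_option maxHeartbeats 1600000 in
/-- Under (V1)–(V3), `c < c(V_∞)`. -/
theorem stmt12 (V : E3 → ℝ) (Cbar p Vinf : ℝ) (hV : Measurable V) (hC : 0 < Cbar)
    (hcoer : Coercive V Cbar) (hp1 : 3 < p) (hp2 : p < 5)
    (hVinf : Vinf = Filter.liminf V (Filter.cocompact E3))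
    (hle : ∀ᵐ x : E3 ∂volume, V x ≤ Vinf)
    (hstrict : 0 < volume {x : E3 | V x < Vinf})
    (w : E3 → ℝ) (hw : InNehari (fun _ => Vinf) p w)
    (hwg : SMfunc (fun _ => Vinf) p w = cLam p Vinf) :
    groundLevel V p < cLam p Vinf := by
  obtain ⟨⟨hwd, hwL2, hwgL2⟩, hwne, hwNe⟩ := hw
  have hppos : (0:ℝ) < p + 1 := by linarith
  -- a point and a ball where `w ≠ 0`
  have hx0 : ∃ x₀ : E3, w x₀ ≠ 0 := by
    by_contra hcon
    push_neg at hcon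
    exact hwne (Filter.Eventually.of_forall fun x => hcon x)
  obtain ⟨x₀, hx₀⟩ := hx0
  have hcont : Continuous w := hwd.continuous
  have hopen : IsOpen {x : E3 | w x ≠ 0} := isOpen_ne_fun hcont continuous_const
  obtain ⟨r, hr, hball⟩ : ∃ r > 0, Metric.ball x₀ r ⊆ {x : E3 | w x ≠ 0} :=
    Metric.isOpen_iff.1 hopen x₀ hx₀
  -- choose a center `z` such that the well has positive measure in `ball z r`
  obtain ⟨s, hsc, hsd⟩ := TopologicalSpace.exists_countable_dense E3
  have hexz : ∃ z ∈ s, 0 < volume ({x : E3 | V x < Vinf} ∩ Metric.ball z r) := by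
    by_contra hcon
    push_neg at hcon
    have h0 : ∀ z ∈ s, volume ({x : E3 | V x < Vinf} ∩ Metric.ball z r) = 0 := fun z hz =>
      le_zero_iff.1 (hcon z hz)
    have hsub : {x : E3 | V x < Vinf} ⊆ ⋃ z ∈ s, ({x : E3 | V x < Vinf} ∩ Metric.ball z r) := by
      intro x hx
      obtain ⟨z, hzs, hz⟩ := Metric.mem_closure_iff.1 (hsd x) r hr
      exact Set.mem_biUnion hzs ⟨hx, Metric.mem_ball.2 hz⟩
    have hnull : volume {x : E3 | V x < Vinf} = 0 :=
      measure_mono_null hsub ((measure_biUnion_null_iff hsc).2 h0)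
    rw [hnull] at hstrict
    exact lt_irrefl 0 hstrict
  obtain ⟨z, _, hzpos⟩ := hexz
  set τ := x₀ - z with hτ
  set v : E3 → ℝ := fun x => w (x + τ) with hv
  -- basic facts about the translate `v`
  have hvball : ∀ x ∈ Metric.ball z r, v x ≠ 0 := by
    intro x hx
    have hmem : x + τ ∈ Metric.ball x₀ r := by
      rw [Metric.mem_ball] at hx ⊢
      rw [show dist (x + τ) x₀ = dist x z from by
        rw [dist_eq_norm, dist_eq_norm, hτ]; congr 1; abel]
      exact hx
    exact hball hmem
  have hvd : Differentiable ℝ v := hwd.comp (differentiable_id.add_const τ)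
  have hmp : MeasurePreserving (fun x : E3 => x + τ) volume volume :=
    measurePreserving_add_right volume τ
  have hvL2 : MemLp v 2 volume := hwL2.comp_measurePreserving hmp
  have hgradv : ∀ x, gradient v x = gradient w (x + τ) := fun x => grad_comp_add_right hwd τ x
  have hvgL2 : MemLp (fun x => gradient v x) 2 volume := by
    have h' := hwgL2.comp_measurePreserving hmp
    have heq : (fun x => gradient v x) = (fun x => gradient w x) ∘ (fun x : E3 => x + τ) :=
      funext fun x => hgradv x
    rw [heq]
    exact h'
  have hvH1 : MemH1 v := ⟨hvd, hvL2, hvgL2⟩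
  have hvne : ¬ (v =ᵐ[volume] (fun _ => (0:ℝ))) := by
    intro hae
    have h0 : volume {x : E3 | ¬ v x = (0:ℝ)} = 0 := ae_iff.1 hae
    have hball0 : volume (Metric.ball z r) = 0 :=
      measure_mono_null (fun x hx => hvball x hx) h0
    exact absurd hball0 (Metric.measure_ball_pos volume z hr).ne'
  have hphiv : ∀ x, phiU v x = phiU w (x + τ) := fun x => phiU_comp_add_right w τ x
  -- translation invariance of the relevant integrals
  have hTgrad : (∫ x : E3, (‖gradient v x‖ ^ 2 + Vinf * (v x) ^ 2))
      = ∫ x : E3, (‖gradient w x‖ ^ 2 + Vinf * (w x) ^ 2) := by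
    rw [show (fun x : E3 => ‖gradient v x‖ ^ 2 + Vinf * (v x) ^ 2)
        = fun x : E3 => (fun y : E3 => ‖gradient w y‖ ^ 2 + Vinf * (w y) ^ 2) (x + τ) from
        funext fun x => by rw [hgradv x]]
    exact integral_add_right_eq_self
      (fun y : E3 => ‖gradient w y‖ ^ 2 + Vinf * (w y) ^ 2) τ
  have hTphi : (∫ x : E3, phiU v x * (v x) ^ 2) = ∫ x : E3, phiU w x * (w x) ^ 2 := by
    rw [show (fun x : E3 => phiU v x * (v x) ^ 2)
        = fun x : E3 => (fun y : E3 => phiU w y * (w y) ^ 2) (x + τ) from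
        funext fun x => by rw [hphiv x]]
    exact integral_add_right_eq_self (fun y : E3 => phiU w y * (w y) ^ 2) τ
  have hTq : (∫ x : E3, |v x| ^ (p + 1)) = ∫ x : E3, |w x| ^ (p + 1) := by
    rw [show (fun x : E3 => |v x| ^ (p + 1))
        = fun x : E3 => (fun y : E3 => |w y| ^ (p + 1)) (x + τ) from
        funext fun x => rfl]
    exact integral_add_right_eq_self (fun y : E3 => |w y| ^ (p + 1)) τ
  have hTneh : (∫ x : E3, (‖gradient v x‖ ^ 2 + Vinf * (v x) ^ 2 + phiU v x * (v x) ^ 2))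
      = ∫ x : E3, (‖gradient w x‖ ^ 2 + Vinf * (w x) ^ 2 + phiU w x * (w x) ^ 2) := by
    rw [show (fun x : E3 => ‖gradient v x‖ ^ 2 + Vinf * (v x) ^ 2 + phiU v x * (v x) ^ 2)
        = fun x : E3 =>
          (fun y : E3 => ‖gradient w y‖ ^ 2 + Vinf * (w y) ^ 2 + phiU w y * (w y) ^ 2) (x + τ) from
        funext fun x => by rw [hgradv x, hphiv x]]
    exact integral_add_right_eq_self
      (fun y : E3 => ‖gradient w y‖ ^ 2 + Vinf * (w y) ^ 2 + phiU w y * (w y) ^ 2) τ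
  have hwNe' : (∫ x : E3, (‖gradient w x‖ ^ 2 + Vinf * (w x) ^ 2 + phiU w x * (w x) ^ 2))
      = ∫ x : E3, |w x| ^ (p + 1) := hwNe
  have hvNe : (∫ x : E3, (‖gradient v x‖ ^ 2 + Vinf * (v x) ^ 2 + phiU v x * (v x) ^ 2))
      = ∫ x : E3, |v x| ^ (p + 1) := by
    rw [hTneh, hTq]
    exact hwNe'
  have hSMv : SMfunc (fun _ => Vinf) p v = SMfunc (fun _ => Vinf) p w := by
    show (1/2) * (∫ x : E3, (‖gradient v x‖ ^ 2 + Vinf * (v x) ^ 2))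
        + (1/4) * (∫ x : E3, phiU v x * (v x) ^ 2)
        - (1/(p+1)) * (∫ x : E3, |v x| ^ (p + 1))
      = (1/2) * (∫ x : E3, (‖gradient w x‖ ^ 2 + Vinf * (w x) ^ 2))
        + (1/4) * (∫ x : E3, phiU w x * (w x) ^ 2)
        - (1/(p+1)) * (∫ x : E3, |w x| ^ (p + 1))
    rw [hTgrad, hTphi, hTq]
  -- integrability facts
  have hIv2 : Integrable (fun x => (v x) ^ 2) volume := hvL2.integrable_sq
  have hIgv2 : Integrable (fun x => ‖gradient v x‖ ^ 2) volume := hvgL2.norm.integrable_sq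
  have hIginf : Integrable (fun x => ‖gradient v x‖ ^ 2 + Vinf * (v x) ^ 2) volume :=
    hIgv2.add (hIv2.const_mul Vinf)
  obtain ⟨hIg, hApos⟩ := nehari_base V Cbar hC hcoer hvH1 hvne
  set A := ∫ x : E3, (‖gradient v x‖ ^ 2 + V x * (v x) ^ 2) with hA
  -- the gain `S`
  have hfeq : (fun x : E3 => (Vinf - V x) * (v x) ^ 2)
      = fun x => (‖gradient v x‖ ^ 2 + Vinf * (v x) ^ 2)
          - (‖gradient v x‖ ^ 2 + V x * (v x) ^ 2) :=
    funext fun x => by ring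
  have hIf : Integrable (fun x : E3 => (Vinf - V x) * (v x) ^ 2) volume := by
    rw [hfeq]; exact hIginf.sub hIg
  have hSpos : 0 < ∫ x : E3, (Vinf - V x) * (v x) ^ 2 := by
    rw [integral_pos_iff_support_of_nonneg_ae
      (by filter_upwards [hle] with x hx; exact mul_nonneg (sub_nonneg.2 hx) (sq_nonneg _)) hIf]
    refine lt_of_lt_of_le hzpos (measure_mono ?_)
    rintro x ⟨hx1, hx2⟩
    have h1 : 0 < Vinf - V x := sub_pos.2 hx1
    have h2 : v x ≠ 0 := hvball x hx2
    have h3 : 0 < (v x) ^ 2 := by positivity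
    simp only [Function.mem_support]
    exact (mul_pos h1 h3).ne'
  set S := ∫ x : E3, (Vinf - V x) * (v x) ^ 2 with hSdef
  have hAinf : (∫ x : E3, (‖gradient v x‖ ^ 2 + Vinf * (v x) ^ 2)) = A + S := by
    have heq : (fun x : E3 => ‖gradient v x‖ ^ 2 + Vinf * (v x) ^ 2)
        = fun x => (‖gradient v x‖ ^ 2 + V x * (v x) ^ 2) + (Vinf - V x) * (v x) ^ 2 :=
      funext fun x => by ring
    rw [heq, integral_add hIg hIf]
  clear_value A S
  -- lower bound for the infimum
  have hbdd : BddBelow (SMfunc V p '' {u | InNehari V p u}) := by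
    refine ⟨0, fun y hy => ?_⟩
    obtain ⟨u', hu', rfl⟩ := hy
    exact nehari_nonneg V Cbar p hC hcoer hp1 hu'
  rw [← hwg, ← hSMv]
  have hmain : ∃ u : E3 → ℝ, InNehari V p u ∧ SMfunc V p u < SMfunc (fun _ => Vinf) p v := by
    by_cases hint : Integrable
        (fun x => ‖gradient v x‖ ^ 2 + Vinf * (v x) ^ 2 + phiU v x * (v x) ^ 2) volume
    · -- the regular case: all pieces integrable, rescale `v` onto the Nehari manifold of `V`
      have hIh : Integrable (fun x => phiU v x * (v x) ^ 2) volume := by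
        have h' := hint.sub hIginf
        refine h'.congr (Eventually.of_forall fun x => ?_)
        simp only [Pi.sub_apply]
        ring
      set B := ∫ x : E3, phiU v x * (v x) ^ 2 with hB
      have hBnn : 0 ≤ B := by
        rw [hB]
        exact integral_nonneg fun x => mul_nonneg (phiU_nonneg v x) (sq_nonneg _)
      have hDeq : (∫ x : E3, |v x| ^ (p + 1)) = A + S + B := by
        rw [← hvNe, integral_add hIginf hIh, hAinf, ← hB]
      set D := A + S + B with hD
      clear_value B D
      have hDpos : 0 < D := by rw [hD]; linarith
      have h2D : (0:ℝ) < 2 * D := by linarith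
      -- find the projection parameter t₀
      set t₁ := min (1/2 : ℝ) (Real.sqrt (A / (2 * D))) with ht₁
      have ht₁pos : 0 < t₁ := lt_min (by norm_num) (Real.sqrt_pos.2 (div_pos hApos h2D))
      have ht₁le1 : t₁ ≤ 1 := le_trans (min_le_left _ _) (by norm_num)
      have h4 : t₁ ≤ Real.sqrt (A / (2 * D)) := min_le_right _ _
      clear_value t₁
      set f : ℝ → ℝ := fun t => A + t ^ 2 * B - t ^ (p - 1 : ℝ) * D with hf
      have hfc : Continuous f := by
        have h1 : Continuous fun t : ℝ => t ^ (p - 1 : ℝ) :=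
          continuous_iff_continuousAt.2 fun t =>
            Real.continuousAt_rpow_const t _ (Or.inr (by linarith))
        exact (continuous_const.add ((continuous_pow 2).mul continuous_const)).sub
          (h1.mul continuous_const)
      have er2' : t₁ ^ (2:ℝ) = t₁ ^ 2 := by
        rw [← Real.rpow_natCast t₁ 2]; norm_num
      have hft₁ : 0 < f t₁ := by
        have e1 : t₁ ^ (p - 1 : ℝ) ≤ t₁ ^ (2:ℝ) :=
          Real.rpow_le_rpow_of_exponent_ge ht₁pos ht₁le1 (by linarith)
        have e3 : t₁ ^ 2 ≤ A / (2 * D) := by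
          have h5 := pow_le_pow_left₀ ht₁pos.le h4 2
          rwa [Real.sq_sqrt (div_pos hApos h2D).le] at h5
        have e4 : t₁ ^ (p - 1 : ℝ) * D ≤ A / 2 := by
          have h6 : t₁ ^ (p - 1 : ℝ) ≤ A / (2 * D) := by
            rw [← er2'] at e3; exact e1.trans e3
          calc t₁ ^ (p - 1 : ℝ) * D ≤ A / (2 * D) * D :=
                mul_le_mul_of_nonneg_right h6 hDpos.le
            _ = A / 2 := by
                rw [div_mul_eq_mul_div, mul_comm A D, mul_comm 2 D, mul_div_mul_left _ _ hDpos.ne']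
        have hb : 0 ≤ t₁ ^ 2 * B := by positivity
        show 0 < A + t₁ ^ 2 * B - t₁ ^ (p - 1 : ℝ) * D
        linarith
      have hf1 : f 1 = -S := by
        show A + 1 ^ 2 * B - 1 ^ (p - 1 : ℝ) * D = -S
        rw [Real.one_rpow, hD]; ring
      obtain ⟨t₀, ht₀mem, ht₀root⟩ :=
        intermediate_value_Icc' ht₁le1 hfc.continuousOn
          ⟨by rw [hf1]; linarith, hft₁.le⟩
      obtain ⟨ht₀ge, ht₀le⟩ := ht₀mem
      have ht₀pos : 0 < t₀ := lt_of_lt_of_le ht₁pos ht₀ge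
      have ht₀lt1 : t₀ < 1 := lt_of_le_of_ne ht₀le (fun hh => by
        rw [hh, hf1] at ht₀root; linarith)
      have hroot : A + t₀ ^ 2 * B = t₀ ^ (p - 1 : ℝ) * D := by
        have h7 : A + t₀ ^ 2 * B - t₀ ^ (p - 1 : ℝ) * D = 0 := ht₀root
        linarith
      set X := t₀ ^ (p + 1 : ℝ) with hX
      have hXexp : t₀ ^ 2 * t₀ ^ (p - 1 : ℝ) = X := by
        rw [hX, ← Real.rpow_natCast t₀ 2, ← Real.rpow_add ht₀pos]
        congr 1
        push_cast
        ring
      clear_value X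
      -- the competitor `u = t₀ v`
      set u : E3 → ℝ := fun x => t₀ * v x with hu
      have hgradu : ∀ x, gradient u x = t₀ • gradient v x := fun x => grad_const_mul hvd t₀ x
      have hud : Differentiable ℝ u := hvd.const_mul t₀
      have huL2 : MemLp u 2 volume := hvL2.const_mul t₀
      have hugL2 : MemLp (fun x => gradient u x) 2 volume := by
        have h' := hvgL2.const_smul t₀
        have heq : (fun x => gradient u x) = fun x => t₀ • gradient v x := funext hgradu
        rw [heq]
        exact h'
      have hune : ¬ (u =ᵐ[volume] fun _ => (0:ℝ)) := by
        intro hae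
        apply hvne
        filter_upwards [hae] with x hx
        have hx' : t₀ * v x = 0 := hx
        rcases mul_eq_zero.1 hx' with h | h
        · exact absurd h ht₀pos.ne'
        · exact h
      -- integrand identities for `u`
      have eg : (fun x : E3 => ‖gradient u x‖ ^ 2 + V x * (u x) ^ 2)
          = fun x => t₀ ^ 2 * (‖gradient v x‖ ^ 2 + V x * (v x) ^ 2) := by
        funext x
        rw [hgradu x]
        simp only [hu, norm_smul, Real.norm_eq_abs, mul_pow, sq_abs]
        ring
      have eh : (fun x : E3 => phiU u x * (u x) ^ 2)
          = fun x => t₀ ^ 4 * (phiU v x * (v x) ^ 2) := by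
        funext x
        rw [show phiU u x = t₀ ^ 2 * phiU v x from phiU_const_mul v t₀ x]
        simp only [hu, mul_pow]
        ring
      have eq' : (fun x : E3 => |u x| ^ (p + 1)) = fun x => X * |v x| ^ (p + 1) := by
        funext x
        simp only [hu, hX]
        rw [abs_mul, abs_of_pos ht₀pos, Real.mul_rpow ht₀pos.le (abs_nonneg _)]
      have hIgu : (∫ x : E3, (‖gradient u x‖ ^ 2 + V x * (u x) ^ 2)) = t₀ ^ 2 * A := by
        rw [eg, integral_const_mul, ← hA]
      have hIhu : (∫ x : E3, phiU u x * (u x) ^ 2) = t₀ ^ 4 * B := by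
        rw [eh, integral_const_mul, ← hB]
      have hIqu : (∫ x : E3, |u x| ^ (p + 1)) = X * D := by
        rw [eq', integral_const_mul, hDeq]
      have hNehu : (∫ x : E3, (‖gradient u x‖ ^ 2 + V x * (u x) ^ 2 + phiU u x * (u x) ^ 2))
          = ∫ x : E3, |u x| ^ (p + 1) := by
        have esum : (fun x : E3 => ‖gradient u x‖ ^ 2 + V x * (u x) ^ 2 + phiU u x * (u x) ^ 2)
            = fun x => t₀ ^ 2 * (‖gradient v x‖ ^ 2 + V x * (v x) ^ 2)
                + t₀ ^ 4 * (phiU v x * (v x) ^ 2) := by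
          funext x
          have e1 := congrFun eg x
          have e2 := congrFun eh x
          linear_combination e1 + e2
        rw [esum, integral_add (hIg.const_mul _) (hIh.const_mul _), integral_const_mul,
          integral_const_mul, ← hA, ← hB, hIqu]
        calc t₀ ^ 2 * A + t₀ ^ 4 * B = t₀ ^ 2 * (A + t₀ ^ 2 * B) := by ring
          _ = t₀ ^ 2 * (t₀ ^ (p - 1 : ℝ) * D) := by rw [hroot]
          _ = X * D := by rw [← hXexp]; ring
      refine ⟨u, ⟨⟨hud, huL2, hugL2⟩, hune, hNehu⟩, ?_⟩
      have hSMu : SMfunc V p u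
          = 1/2 * (t₀ ^ 2 * A) + 1/4 * (t₀ ^ 4 * B) - 1/(p+1) * (X * D) := by
        show (1/2) * (∫ x : E3, (‖gradient u x‖ ^ 2 + V x * (u x) ^ 2))
            + (1/4) * (∫ x : E3, phiU u x * (u x) ^ 2)
            - (1/(p+1)) * (∫ x : E3, |u x| ^ (p + 1)) = _
        rw [hIgu, hIhu, hIqu]
      have hSMvinf : SMfunc (fun _ => Vinf) p v
          = 1/2 * (A + S) + 1/4 * B - 1/(p+1) * D := by
        show (1/2) * (∫ x : E3, (‖gradient v x‖ ^ 2 + Vinf * (v x) ^ 2))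
            + (1/4) * (∫ x : E3, phiU v x * (v x) ^ 2)
            - (1/(p+1)) * (∫ x : E3, |v x| ^ (p + 1)) = _
        rw [hAinf, ← hB, hDeq]
      rw [hSMu, hSMvinf]
      -- the final numeric inequality
      have hkl1 := kl ht₀pos ht₀lt1.le two_pos (by linarith : (2:ℝ) ≤ p + 1)
      have hkl2 := kl ht₀pos ht₀lt1.le (by norm_num : (0:ℝ) < 4) (by linarith : (4:ℝ) ≤ p + 1)
      have er2 : t₀ ^ (2:ℝ) = t₀ ^ 2 := by rw [← Real.rpow_natCast t₀ 2]; norm_num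
      have er4 : t₀ ^ (4:ℝ) = t₀ ^ 4 := by rw [← Real.rpow_natCast t₀ 4]; norm_num
      rw [er2, ← hX] at hkl1
      rw [er4, ← hX] at hkl2
      have hα : (1 - X) / (p + 1) ≤ (1 - t₀ ^ 2) / 2 := by
        rw [div_le_div_iff₀ hppos two_pos]; linarith
      have hβ : (1 - X) / (p + 1) ≤ (1 - t₀ ^ 4) / 4 := by
        rw [div_le_div_iff₀ hppos (by norm_num)]; linarith
      rw [← sub_pos]
      have expand : (1/2 * (A + S) + 1/4 * B - 1/(p+1) * D)
            - (1/2 * (t₀ ^ 2 * A) + 1/4 * (t₀ ^ 4 * B) - 1/(p+1) * (X * D))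
          = (A + S) * ((1 - t₀ ^ 2)/2 - (1 - X)/(p+1))
            + B * ((1 - t₀ ^ 4)/4 - (1 - X)/(p+1)) + t₀ ^ 2 * S / 2 := by
        rw [hD]; field_simp; ring
      rw [expand]
      have h1 : 0 ≤ (A + S) * ((1 - t₀ ^ 2)/2 - (1 - X)/(p+1)) :=
        mul_nonneg (by linarith) (by linarith)
      have h2 : 0 ≤ B * ((1 - t₀ ^ 4)/4 - (1 - X)/(p+1)) := mul_nonneg hBnn (by linarith)
      have h3 : 0 < t₀ ^ 2 * S / 2 := by positivity
      linarith
    · -- the degenerate case: `v` is itself (vacuously) on the Nehari manifold of `V`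
      have hhn : ¬ Integrable (fun x => phiU v x * (v x) ^ 2) volume := fun hh =>
        hint (hIginf.add hh)
      have hh0 : (∫ x : E3, phiU v x * (v x) ^ 2) = 0 := integral_undef hhn
      have hq0 : (∫ x : E3, |v x| ^ (p + 1)) = 0 := by
        rw [← hvNe]; exact integral_undef hint
      have hgh : ¬ Integrable
          (fun x => ‖gradient v x‖ ^ 2 + V x * (v x) ^ 2 + phiU v x * (v x) ^ 2) volume := by
        intro hc
        have hh : Integrable (fun x => phiU v x * (v x) ^ 2) volume := by
          have h' := hc.sub hIg
          refine h'.congr (Eventually.of_forall fun x => ?_)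
          simp only [Pi.sub_apply]
          ring
        exact hhn hh
      refine ⟨v, ⟨hvH1, hvne, ?_⟩, ?_⟩
      · rw [integral_undef hgh, hq0]
      · have hsm1 : SMfunc V p v = 1/2 * A := by
          show (1/2) * (∫ x : E3, (‖gradient v x‖ ^ 2 + V x * (v x) ^ 2))
              + (1/4) * (∫ x : E3, phiU v x * (v x) ^ 2)
              - (1/(p+1)) * (∫ x : E3, |v x| ^ (p + 1)) = _
          rw [hh0, hq0, ← hA]; ring
        have hsm2 : SMfunc (fun _ => Vinf) p v = 1/2 * (A + S) := by
          show (1/2) * (∫ x : E3, (‖gradient v x‖ ^ 2 + Vinf * (v x) ^ 2))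
              + (1/4) * (∫ x : E3, phiU v x * (v x) ^ 2)
              - (1/(p+1)) * (∫ x : E3, |v x| ^ (p + 1)) = _
          rw [hAinf, hh0, hq0]; ring
        rw [hsm1, hsm2]
        linarith
  obtain ⟨u, huN, hulf⟩ := hmain
  calc groundLevel V p ≤ SMfunc V p u := csInf_le hbdd ⟨u, huN, rfl⟩
    _ < _ := hulf
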